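/- Let K, i be positive integers with 0 < i < K and let N, M, α, β be nonnegative integers with 1 ≤ α+β ≤ K−1 and β−i ≤ N−M ≤ K−α−i. Then the polynomial D_{K,i}(N,M;α,β) = ∑_{j∈ℤ} ( q^{j((α+β)Kj + Kβ − (α+β)i)} [M+N choose M−Kj]_q − q^{((α+β)j+β)(Kj+i)} [M+N choose M−Kj−i]_q ) has nonnegative coefficients. -/

import Mathlib

open LaurentPolynomial Finset

noncomputable section

/-- The Gaussian binomial coefficient `[m choose n]_q` as a polynomial in `q`,
defined via the `q`-Pascal recurrence; it equals `(q;q)_m/((q;q)_n (q;q)_{m-n})`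
for `0 ≤ n ≤ m`. -/
def gb : ℕ → ℕ → Polynomial ℤ
  | _, 0 => 1
  | 0, _ + 1 => 0
  | m + 1, n + 1 => gb m n + Polynomial.X ^ (n + 1) * gb m (n + 1)

/-- `[m choose n]_q` with integer indices, zero unless `0 ≤ n ≤ m`,
viewed as a Laurent polynomial in `q`. -/
def qbin (m n : ℤ) : LaurentPolynomial ℤ :=
  if 0 ≤ n ∧ n ≤ m then (gb m.toNat n.toNat).toLaurent else 0

/-- A Laurent polynomial is a polynomial in `q` with nonnegative coefficients. -/
def IsNonneg (x : LaurentPolynomial ℤ) : Prop :=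
  ∃ P : Polynomial ℤ, (∀ n, 0 ≤ P.coeff n) ∧ P.toLaurent = x

/-- The triangular number `T(j) = j(j+1)/2`. -/
def tri (j : ℤ) : ℤ := j * (j + 1) / 2

/-- The hook-difference generating function `D_{K,i}(N,M;α,β)` of Andrews et al.,
parametrized by the integers `aK = αK`, `bK = βK`, `ai = αi`, `bi = βi`
(so that rational `α, β` with these products integral are allowed):
`D = ∑_{j ∈ ℤ} ( q^{j((α+β)Kj + Kβ - (α+β)i)} [M+N choose M-Kj]_q
               - q^{((α+β)j+β)(Kj+i)} [M+N choose M-Kj-i]_q )`. -/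
def D (K i N M aK bK ai bi : ℤ) : LaurentPolynomial ℤ :=
  ∑ᶠ j : ℤ,
    (T (j * ((aK + bK) * j + bK - (ai + bi))) * qbin (M + N) (M - K * j) -
      T ((aK + bK) * j ^ 2 + (bK + ai + bi) * j + bi) * qbin (M + N) (M - K * j - i))

/-!
Both q-Pascal recurrences of `[M+N choose ·]_q` lift termwise to `D`:
`D(N,M;α,β) = D(N,M-1;α,β) + q^M D(N-1,M;α+1,β-1)` and
`D(N,M;α,β) = q^N D(N,M-1;α-1,β+1) + D(N-1,M;α,β)`.
Induct on `N + M`: away from the boundary of the region `β - i ≤ N - M ≤ K - α - i`, one of the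
two recurrences stays inside the region. On the boundary lines `β = 0, M = N + i` and
`α = 0, N = M + K - i` the reflection `j ↦ -j`, resp. `j ↦ -1 - j`, together with the symmetry
`[m choose n]_q = [m choose m - n]_q`, exchanges the two halves of the sum, so `D = 0`; and for
`M = 0` or `N = 0` only the term `j = 0` survives, so `D = 1`.
-/

open Polynomial

theorem gb_zero_right (m : ℕ) : gb m 0 = 1 := by
  cases m <;> rfl

theorem gb_succ_succ (m n : ℕ) : gb (m + 1) (n + 1) = gb m n + X ^ (n + 1) * gb m (n + 1) := rfl

theorem gb_of_lt : ∀ {m n : ℕ}, m < n → gb m n = 0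
  | 0, _ + 1, _ => rfl
  | m + 1, n + 1, h => by
    rw [gb_succ_succ, gb_of_lt (by omega), gb_of_lt (by omega), mul_zero, add_zero]

theorem gb_self : ∀ m : ℕ, gb m m = 1
  | 0 => rfl
  | m + 1 => by rw [gb_succ_succ, gb_self m, gb_of_lt m.lt_succ_self, mul_zero, add_zero]

theorem gb_succ_succ' : ∀ m n : ℕ,
    gb (m + n + 1) (n + 1) = X ^ m * gb (m + n) n + gb (m + n) (n + 1)
  | 0, n => by rw [zero_add, gb_self, gb_self, gb_of_lt n.lt_succ_self, pow_zero, one_mul, add_zero]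
  | m + 1, 0 => by
    have ih := gb_succ_succ' m 0
    rw [add_zero, gb_zero_right] at ih ⊢
    rw [gb_succ_succ, gb_zero_right]
    linear_combination X * ih - gb_succ_succ m 0 - gb_zero_right m
  | m + 1, n + 1 => by
    have ih₁ := gb_succ_succ' (m + 1) n
    have ih₂ := gb_succ_succ' m (n + 1)
    rw [Nat.add_right_comm m 1 n] at ih₁
    rw [← Nat.add_assoc] at ih₂ ⊢
    rw [Nat.add_right_comm m 1 n]
    linear_combination gb_succ_succ (m + n + 1 + 1) (n + 1) + ih₁ + X ^ (n + 1 + 1) * ih₂ -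
      X ^ (m + 1) * gb_succ_succ (m + n + 1) n - gb_succ_succ (m + n + 1) (n + 1)
termination_by m n => m + n

theorem gb_symm : ∀ m n : ℕ, gb (m + n) m = gb (m + n) n
  | 0, n => by rw [zero_add, gb_self, gb_zero_right]
  | m + 1, 0 => by rw [add_zero, gb_self, gb_zero_right]
  | m + 1, n + 1 => by
    have ih₁ := gb_symm m (n + 1)
    have ih₂ := gb_symm (m + 1) n
    rw [← Nat.add_assoc] at ih₁ ⊢
    rw [Nat.add_right_comm m 1 n] at ih₂ ⊢
    rw [gb_succ_succ, ih₁, ih₂, Nat.add_right_comm m n 1, gb_succ_succ', Nat.add_right_comm m 1 n]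
    ring
termination_by m n => m + n

theorem qbin_of_not_mem {m n : ℤ} (h : ¬(0 ≤ n ∧ n ≤ m)) : qbin m n = 0 := if_neg h

theorem qbin_of_neg {m n : ℤ} (h : n < 0) : qbin m n = 0 := qbin_of_not_mem (by omega)

theorem qbin_of_lt {m n : ℤ} (h : m < n) : qbin m n = 0 := qbin_of_not_mem (by omega)

theorem mem_Icc_of_qbin_ne_zero {m n : ℤ} (h : qbin m n ≠ 0) : n ∈ Set.Icc 0 m :=
  not_not.mp (mt qbin_of_not_mem h)

theorem qbin_natCast (m n : ℕ) : qbin m n = (gb m n).toLaurent := by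
  by_cases h : n ≤ m
  · exact if_pos ⟨n.cast_nonneg, by exact_mod_cast h⟩
  · rw [qbin_of_lt (by omega), gb_of_lt (by omega), map_zero]

theorem qbin_zero_right {m : ℤ} (hm : 0 ≤ m) : qbin m 0 = 1 := by
  lift m to ℕ using hm
  rw [← Nat.cast_zero, qbin_natCast, gb_zero_right, map_one]

theorem qbin_symm {m : ℤ} (hm : 0 ≤ m) (n : ℤ) : qbin m n = qbin m (m - n) := by
  by_cases hn : 0 ≤ n ∧ n ≤ m
  · lift n to ℕ using hn.1
    obtain ⟨a, rfl⟩ : ∃ a : ℕ, m = a + n := ⟨(m - n).toNat, by omega⟩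
    rw [add_sub_cancel_right, ← Nat.cast_add, qbin_natCast, qbin_natCast, gb_symm]
  · rw [qbin_of_not_mem hn, qbin_of_not_mem (by omega)]

theorem qbin_self {m : ℤ} (hm : 0 ≤ m) : qbin m m = 1 := by
  rw [qbin_symm hm, sub_self, qbin_zero_right hm]

theorem qbin_succ {m : ℤ} (hm : 0 ≤ m) (n : ℤ) :
    qbin (m + 1) n = qbin m (n - 1) + T n * qbin m n := by
  lift m to ℕ using hm
  rcases lt_trichotomy n 0 with hn | rfl | hn
  · rw [qbin_of_neg hn, qbin_of_neg (by omega), qbin_of_neg hn, mul_zero, add_zero]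
  · rw [qbin_zero_right (by omega), qbin_of_neg (by omega), qbin_zero_right (by omega), T_zero,
      one_mul, zero_add]
  · lift n to ℕ using hn.le
    obtain ⟨k, rfl⟩ := Nat.exists_eq_add_one_of_ne_zero (by omega : n ≠ 0)
    rw [Nat.cast_add_one, add_sub_cancel_right, ← Nat.cast_add_one, ← Nat.cast_add_one,
      qbin_natCast, qbin_natCast, qbin_natCast, gb_succ_succ, map_add, map_mul, toLaurent_X_pow]

theorem qbin_succ' {m : ℤ} (hm : 0 ≤ m) (n : ℤ) :
    qbin (m + 1) n = T (m + 1 - n) * qbin m (n - 1) + qbin m n := by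
  rw [qbin_symm (by omega), qbin_succ hm, qbin_symm hm n, qbin_symm hm (n - 1)]
  ring_nf

theorem IsNonneg.zero : IsNonneg 0 := ⟨0, fun _ => le_rfl, map_zero _⟩

theorem IsNonneg.one : IsNonneg 1 :=
  ⟨1, fun n => by rw [coeff_one]; split_ifs <;> norm_num, map_one _⟩

theorem IsNonneg.add {x y : LaurentPolynomial ℤ} (hx : IsNonneg x) (hy : IsNonneg y) :
    IsNonneg (x + y) := by
  obtain ⟨P, hP, rfl⟩ := hx
  obtain ⟨Q, hQ, rfl⟩ := hy
  exact ⟨P + Q, fun n => by rw [coeff_add]; exact add_nonneg (hP n) (hQ n), map_add _ _ _⟩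

theorem IsNonneg.T_mul {x : LaurentPolynomial ℤ} {n : ℤ} (hn : 0 ≤ n) (hx : IsNonneg x) :
    IsNonneg (T n * x) := by
  lift n to ℕ using hn
  obtain ⟨P, hP, rfl⟩ := hx
  refine ⟨X ^ n * P, fun k => ?_, by rw [map_mul, toLaurent_X_pow]⟩
  rw [coeff_X_pow_mul']
  split_ifs
  exacts [hP _, le_rfl]

theorem hasFiniteSupport_mul_qbin {f : ℤ → ℤ} (hf : f.Injective) (x : ℤ → LaurentPolynomial ℤ)
    (m : ℤ) : Function.HasFiniteSupport fun j => x j * qbin m (f j) :=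
  ((Set.finite_Icc 0 m).preimage hf.injOn).subset fun _ hj =>
    mem_Icc_of_qbin_ne_zero (right_ne_zero_of_mul hj)

theorem finsum_sub_eq_zero_of_comp_equiv {α G : Type*} [AddCommGroup G] {f g : α → G}
    (hf : Function.HasFiniteSupport f) (hg : Function.HasFiniteSupport g) (e : α ≃ α)
    (h : ∀ a, f (e a) = g a) : ∑ᶠ a, (f a - g a) = 0 := by
  rw [finsum_sub_distrib hf hg, sub_eq_zero, ← finsum_comp_equiv e]
  exact finsum_congr h

theorem le_mul_or_mul_le_neg {K j : ℤ} (hK : 0 < K) (hj : j ≠ 0) : K ≤ K * j ∨ K * j ≤ -K := by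
  rcases hj.lt_or_gt with hj | hj
  · right; nlinarith
  · left; nlinarith

def Dterm (K i N M aK bK ai bi j : ℤ) : LaurentPolynomial ℤ :=
  T (j * ((aK + bK) * j + bK - (ai + bi))) * qbin (M + N) (M - K * j) -
    T ((aK + bK) * j ^ 2 + (bK + ai + bi) * j + bi) * qbin (M + N) (M - K * j - i)

section

variable {K i N M aK bK ai bi : ℤ}

theorem D_eq_finsum_Dterm : D K i N M aK bK ai bi = ∑ᶠ j, Dterm K i N M aK bK ai bi j := rfl

theorem hasFiniteSupport_Dterm (hK : K ≠ 0) :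
    Function.HasFiniteSupport (Dterm K i N M aK bK ai bi) :=
  (hasFiniteSupport_mul_qbin (fun _ _ h => mul_left_cancel₀ hK (by linarith)) _ _).sub
    (hasFiniteSupport_mul_qbin (fun _ _ h => mul_left_cancel₀ hK (by linarith)) _ _)

theorem Dterm_eq_add_T_mul (j : ℤ) (h : 0 < M + N) :
    Dterm K i N M aK bK ai bi j = Dterm K i N (M - 1) aK bK ai bi j +
      T M * Dterm K i (N - 1) M (aK + K) (bK - K) (ai + i) (bi - i) j := by
  have hq := qbin_succ (m := M + N - 1) (by omega)
  rw [sub_add_cancel] at hq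
  simp only [Dterm, hq, mul_add, mul_sub, ← mul_assoc, ← T_add]
  ring_nf

theorem Dterm_eq_T_mul_add (j : ℤ) (h : 0 < M + N) :
    Dterm K i N M aK bK ai bi j =
      T N * Dterm K i N (M - 1) (aK - K) (bK + K) (ai - i) (bi + i) j +
        Dterm K i (N - 1) M aK bK ai bi j := by
  have hq := qbin_succ' (m := M + N - 1) (by omega)
  rw [sub_add_cancel] at hq
  simp only [Dterm, hq, mul_add, mul_sub, ← mul_assoc, ← T_add]
  ring_nf

theorem D_eq_add_T_mul (hK : K ≠ 0) (h : 0 < M + N) :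
    D K i N M aK bK ai bi = D K i N (M - 1) aK bK ai bi +
      T M * D K i (N - 1) M (aK + K) (bK - K) (ai + i) (bi - i) := by
  rw [D_eq_finsum_Dterm, D_eq_finsum_Dterm, D_eq_finsum_Dterm, mul_finsum,
    ← finsum_add_distrib (hasFiniteSupport_Dterm hK) ((hasFiniteSupport_Dterm hK).fun_mul_right _)]
  exact finsum_congr fun j => Dterm_eq_add_T_mul j h

theorem D_eq_T_mul_add (hK : K ≠ 0) (h : 0 < M + N) :
    D K i N M aK bK ai bi = T N * D K i N (M - 1) (aK - K) (bK + K) (ai - i) (bi + i) +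
      D K i (N - 1) M aK bK ai bi := by
  rw [D_eq_finsum_Dterm, D_eq_finsum_Dterm, D_eq_finsum_Dterm, mul_finsum,
    ← finsum_add_distrib ((hasFiniteSupport_Dterm hK).fun_mul_right _) (hasFiniteSupport_Dterm hK)]
  exact finsum_congr fun j => Dterm_eq_T_mul_add j h

theorem D_eq_zero_of_bK_eq_zero (hK : K ≠ 0) (hMN : 0 ≤ M + N) (hM : M = N + i) :
    D K i N M aK 0 ai 0 = 0 := by
  refine finsum_sub_eq_zero_of_comp_equiv
    (hasFiniteSupport_mul_qbin (fun _ _ h => mul_left_cancel₀ hK (by linarith)) _ _)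
    (hasFiniteSupport_mul_qbin (fun _ _ h => mul_left_cancel₀ hK (by linarith)) _ _)
    (Equiv.neg ℤ) fun j => ?_
  rw [Equiv.neg_apply, qbin_symm hMN, hM]
  ring_nf

theorem D_eq_zero_of_aK_eq_zero (hK : K ≠ 0) (hMN : 0 ≤ M + N) (hN : N = M + K - i) :
    D K i N M 0 bK 0 bi = 0 := by
  refine finsum_sub_eq_zero_of_comp_equiv
    (hasFiniteSupport_mul_qbin (fun _ _ h => mul_left_cancel₀ hK (by linarith)) _ _)
    (hasFiniteSupport_mul_qbin (fun _ _ h => mul_left_cancel₀ hK (by linarith)) _ _)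
    (Equiv.subLeft (-1)) fun j => ?_
  rw [Equiv.subLeft_apply, qbin_symm hMN, hN]
  ring_nf

theorem D_eq_one_of_M_eq_zero (hi : 0 < i) (hM : M = 0) (hN : 0 ≤ N) (hNK : N < K - i) :
    D K i N M aK bK ai bi = 1 := by
  subst hM
  rw [D_eq_finsum_Dterm, finsum_eq_single _ 0 fun j hj => ?_]
  · simp [Dterm, qbin_zero_right hN, qbin_of_neg (neg_lt_zero.mpr hi)]
  · have := le_mul_or_mul_le_neg (by omega : 0 < K) hj
    rw [Dterm, qbin_of_not_mem (by omega), qbin_of_not_mem (by omega), mul_zero, mul_zero, sub_zero]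

theorem D_eq_one_of_N_eq_zero (hN : N = 0) (hM : 0 ≤ M) (hMi : M < i) (hiK : i < K) :
    D K i N M aK bK ai bi = 1 := by
  subst hN
  rw [D_eq_finsum_Dterm, finsum_eq_single _ 0 fun j hj => ?_]
  · simp [Dterm, qbin_self hM, qbin_of_neg (sub_neg.mpr hMi)]
  · have := le_mul_or_mul_le_neg (by omega : 0 < K) hj
    rw [Dterm, qbin_of_not_mem (by omega), qbin_of_not_mem (by omega), mul_zero, mul_zero, sub_zero]

end

theorem isNonneg_D {K i : ℤ} (hi : 0 < i) (hiK : i < K) {N M a b : ℤ} (hN : 0 ≤ N) (hM : 0 ≤ M)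
    (ha : 0 ≤ a) (hb : 0 ≤ b) (hab : 1 ≤ a + b) (habK : a + b ≤ K - 1) (h₁ : b - i ≤ N - M)
    (h₂ : N - M ≤ K - a - i) : IsNonneg (D K i N M (a * K) (b * K) (a * i) (b * i)) := by
  have hK : K ≠ 0 := by omega
  by_cases hβ : b = 0 ∧ M = N + i
  · rw [hβ.1, zero_mul, zero_mul, D_eq_zero_of_bK_eq_zero hK (by omega) hβ.2]
    exact .zero
  by_cases hα : a = 0 ∧ N = M + K - i
  · rw [hα.1, zero_mul, zero_mul, D_eq_zero_of_aK_eq_zero hK (by omega) hα.2]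
    exact .zero
  by_cases hM0 : M = 0
  · rw [D_eq_one_of_M_eq_zero hi hM0 hN (by omega)]
    exact .one
  by_cases hN0 : N = 0
  · rw [D_eq_one_of_N_eq_zero hN0 hM (by omega) hiK]
    exact .one
  by_cases hI : 1 ≤ b ∧ N - M < K - a - i
  · rw [D_eq_add_T_mul hK (by omega)]
    simp only [← add_one_mul, ← sub_one_mul]
    exact (isNonneg_D hi hiK hN (by omega) ha hb hab habK (by omega) (by omega)).add
      ((isNonneg_D hi hiK (by omega) hM (by omega) (by omega) (by omega) (by omega) (by omega)
        (by omega)).T_mul hM)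
  · rw [D_eq_T_mul_add hK (by omega)]
    simp only [← add_one_mul, ← sub_one_mul]
    exact ((isNonneg_D hi hiK hN (by omega) (by omega) (by omega) (by omega) (by omega) (by omega)
        (by omega)).T_mul hN).add
      (isNonneg_D hi hiK (by omega) hM ha hb hab habK (by omega) (by omega))
termination_by (N + M).toNat

/-- Andrews–Baxter–Bhatt–Burge–Forrester–Viennot: for `0 < i < K`,
`1 ≤ α + β ≤ K - 1` and `β - i ≤ N - M ≤ K - α - i`, the polynomial
`D_{K,i}(N,M;α,β)` has nonnegative coefficients. -/
theorem D_nonneg (K i N M α β : ℕ) (hi0 : 0 < i) (hiK : i < K)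
    (hαβ1 : 1 ≤ α + β) (hαβ2 : α + β ≤ K - 1)
    (h1 : (β : ℤ) - i ≤ (N : ℤ) - M) (h2 : (N : ℤ) - M ≤ (K : ℤ) - α - i) :
    IsNonneg (D K i N M (α * K) (β * K) (α * i) (β * i)) :=
  isNonneg_D (by omega) (by omega) (by omega) (by omega) (by omega) (by omega) (by omega)
    (by omega) h1 h2
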